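/- arXiv:2411.07452 — 2 statements merged into one kernel-verified Lean document; each statement's English description precedes it below -/
import Mathlib

section
/- If a typing context Δ reduces to Δ₁, Δ₁ deterministically and safely reduces back to Δ (i.e., each step is the unique available reduction and passes through safe states), Δ is a safe state, and Δ reduces (in any number of steps) to an unsafe state Δ', then there exists some Δ₂ ≠ Δ₁ with Δ → Δ₂ →* Δ'. -/
/-- Local multiparty session types. Branching/selection are over a finite
(label) index set `I` with branch function `f`. Payload sorts and
participants are natural numbers. -/
inductive SType : Type where
  | tend : SType
  | tvar : ℕ → SType
  | mu : ℕ → SType → SType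
  | out : ℕ → ℕ → SType → SType
  | inp : ℕ → ℕ → SType → SType
  | sel : ℕ → Finset ℕ → (ℕ → SType) → SType
  | bra : ℕ → Finset ℕ → (ℕ → SType) → SType

/-- Size of a local type. -/
def SType.size : SType → ℕ
  | .tend => 1
  | .tvar _ => 1
  | .mu _ T => 1 + T.size
  | .out _ _ T => 1 + T.size
  | .inp _ _ T => 1 + T.size
  | .sel _ I f => 1 + ∑ i ∈ I, (f i).size
  | .bra _ I f => 1 + ∑ i ∈ I, (f i).size

/-- Substitution of the recursion variable `t` by `U`. -/
def SType.subst : SType → ℕ → SType → SType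
  | .tend, _, _ => .tend
  | .tvar s, t, U => if s = t then U else .tvar s
  | .mu s T, t, U => if s = t then .mu s T else .mu s (T.subst t U)
  | .out p S T, t, U => .out p S (T.subst t U)
  | .inp p S T, t, U => .inp p S (T.subst t U)
  | .sel p I f, t, U => .sel p I (fun i => (f i).subst t U)
  | .bra p I f, t, U => .bra p I (fun i => (f i).subst t U)

/-- The set of subformulas of a local type. -/
def SType.Sub : SType → Set SType
  | .tend => {.tend}
  | .tvar s => {.tvar s}
  | .mu s T => insert (.mu s T) ((fun T' => T'.subst s (.mu s T)) '' T.Sub)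
  | .out p S T => insert (.out p S T) T.Sub
  | .inp p S T => insert (.inp p S T) T.Sub
  | .sel p I f => insert (.sel p I f) (⋃ i ∈ I, (f i).Sub)
  | .bra p I f => insert (.bra p I f) (⋃ i ∈ I, (f i).Sub)

/-- One-shot unfolding of leading `μ` binders: `Unfolds T U` holds iff
repeatedly unfolding leading recursions of `T` terminates with result `U`. -/
inductive Unfolds : SType → SType → Prop
  | tend : Unfolds .tend .tend
  | tvar (t : ℕ) : Unfolds (.tvar t) (.tvar t)
  | out (p S : ℕ) (T : SType) : Unfolds (.out p S T) (.out p S T)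
  | inp (p S : ℕ) (T : SType) : Unfolds (.inp p S T) (.inp p S T)
  | sel (p : ℕ) (I : Finset ℕ) (f : ℕ → SType) : Unfolds (.sel p I f) (.sel p I f)
  | bra (p : ℕ) (I : Finset ℕ) (f : ℕ → SType) : Unfolds (.bra p I f) (.bra p I f)
  | mu {t : ℕ} {T U : SType} :
      Unfolds (T.subst t (.mu t T)) U → Unfolds (.mu t T) U

/-- Actions labelling the transitions of type graphs. -/
inductive Act : Type where
  | ain (p S : ℕ)   -- p?S
  | aout (p S : ℕ)  -- p!S
  | asel (p l : ℕ)  -- p⊕l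
  | abra (p l : ℕ)  -- p&l

/-- Labelled transitions of the type graph of a local type. -/
inductive Tr : SType → Act → SType → Prop
  | inp {T T' : SType} {p S : ℕ} :
      Unfolds T (.inp p S T') → Tr T (.ain p S) T'
  | out {T T' : SType} {p S : ℕ} :
      Unfolds T (.out p S T') → Tr T (.aout p S) T'
  | sel {T : SType} {p l : ℕ} {I : Finset ℕ} {f : ℕ → SType} :
      Unfolds T (.sel p I f) → l ∈ I → Tr T (.asel p l) (f l)
  | bra {T : SType} {p l : ℕ} {I : Finset ℕ} {f : ℕ → SType} :
      Unfolds T (.bra p I f) → l ∈ I → Tr T (.abra p l) (f l)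

/-- The `end`-transition (to the node `Skip`). -/
def TrEnd (T : SType) : Prop := Unfolds T .tend

/-- `R` is a type simulation: termination and inputs/outputs/selections of
the subtype are matched by the supertype (covariantly), and branchings of
the supertype are matched by the subtype (contravariantly). -/
def IsSim (R : SType → SType → Prop) : Prop :=
  ∀ T₁ T₂, R T₁ T₂ →
    (TrEnd T₁ → TrEnd T₂) ∧
    (∀ p S T₁', Tr T₁ (.ain p S) T₁' →
      ∃ T₂', Tr T₂ (.ain p S) T₂' ∧ R T₁' T₂') ∧
    (∀ p S T₁', Tr T₁ (.aout p S) T₁' →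
      ∃ T₂', Tr T₂ (.aout p S) T₂' ∧ R T₁' T₂') ∧
    (∀ p l T₁', Tr T₁ (.asel p l) T₁' →
      ∃ T₂', Tr T₂ (.asel p l) T₂' ∧ R T₁' T₂') ∧
    (∀ p l T₂', Tr T₂ (.abra p l) T₂' →
      ∃ T₁', Tr T₁ (.abra p l) T₁' ∧ R T₁' T₂')

/-- Labels of context reductions: a value communication from `p` to `q`,
or the selection of label `l` by `p` at `q`. -/
inductive CLab : Type where
  | comm (p q : ℕ)
  | pick (p q l : ℕ)

/-- Labelled reduction of typing contexts (a typing context assigns a local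
type to each participant in the finite set `I`). -/
inductive CRedL (I : Finset ℕ) : (ℕ → SType) → CLab → (ℕ → SType) → Prop
  | comm {Γ : ℕ → SType} {p q S : ℕ} {Tp Tq : SType} :
      p ∈ I → q ∈ I → p ≠ q →
      Unfolds (Γ p) (.out q S Tp) → Unfolds (Γ q) (.inp p S Tq) →
      CRedL I Γ (.comm p q) (Function.update (Function.update Γ p Tp) q Tq)
  | pick {Γ : ℕ → SType} {p q l : ℕ} {J K : Finset ℕ} {f g : ℕ → SType} :
      p ∈ I → q ∈ I → p ≠ q →
      Unfolds (Γ p) (.sel q J f) → Unfolds (Γ q) (.bra p K g) →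
      l ∈ J → l ∈ K →
      CRedL I Γ (.pick p q l) (Function.update (Function.update Γ p (f l)) q (g l))

/-- Unlabelled context reduction. -/
def CRed (I : Finset ℕ) (Γ Γ' : ℕ → SType) : Prop :=
  ∃ ℓ, CRedL I Γ ℓ Γ'

/-- A context is a *safe state* if every pending output has a matching input
of the same payload sort, and every pending selection label is accepted by
the corresponding branching. -/
def SafeState (I : Finset ℕ) (Γ : ℕ → SType) : Prop :=
  (∀ p q, p ∈ I → q ∈ I → p ≠ q → ∀ S T S' T',
     Unfolds (Γ p) (.out q S T) → Unfolds (Γ q) (.inp p S' T') → S = S') ∧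
  (∀ p q, p ∈ I → q ∈ I → p ≠ q → ∀ J f K g,
     Unfolds (Γ p) (.sel q J f) → Unfolds (Γ q) (.bra p K g) → J ⊆ K)

/-- Deterministic reduction: `Γ' ` is the unique reduct of `Γ`. -/
def DetRed (I : Finset ℕ) (Γ Γ' : ℕ → SType) : Prop :=
  CRed I Γ Γ' ∧ ∀ Γ'', CRed I Γ Γ'' → Γ'' = Γ'

/-- A deterministic reduction step from a safe state. -/
def SafeDetRed (I : Finset ℕ) (Γ Γ' : ℕ → SType) : Prop :=
  DetRed I Γ Γ' ∧ SafeState I Γ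

/-- Length-indexed reduction paths. -/
inductive PathN (I : Finset ℕ) : ℕ → (ℕ → SType) → (ℕ → SType) → Prop
  | refl (Γ : ℕ → SType) : PathN I 0 Γ Γ
  | step {Γ Δ Γ' : ℕ → SType} {n : ℕ} :
      CRed I Γ Δ → PathN I n Δ Γ' → PathN I (n + 1) Γ Γ'

theorem pathN_of_rtg {I : Finset ℕ} {Γ Γ' : ℕ → SType}
    (h : Relation.ReflTransGen (CRed I) Γ Γ') : ∃ n, PathN I n Γ Γ' := by
  induction h with
  | refl => exact ⟨0, PathN.refl Γ⟩
  | tail _ hstep ih =>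
    obtain ⟨n, hp⟩ := ih
    clear * - hp hstep
    induction hp with
    | refl => exact ⟨1, PathN.step hstep (PathN.refl _)⟩
    | step h _ ih =>
      obtain ⟨m, hm⟩ := ih hstep
      exact ⟨m + 1, PathN.step h hm⟩

theorem rtg_of_pathN {I : Finset ℕ} {n : ℕ} {Γ Γ' : ℕ → SType}
    (h : PathN I n Γ Γ') : Relation.ReflTransGen (CRed I) Γ Γ' := by
  induction h with
  | refl => exact Relation.ReflTransGen.refl
  | step h _ ih => exact Relation.ReflTransGen.head h ih

/-- Along a safe deterministic chain to `Γ`, any path to an unsafe state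
factors through `Γ` with no greater length. -/
theorem det_chain_shortcut {I : Finset ℕ} {Γ Γ' : ℕ → SType}
    (hΓ' : ¬ SafeState I Γ') :
    ∀ {Δ : ℕ → SType}, Relation.ReflTransGen (SafeDetRed I) Δ Γ →
    ∀ m, PathN I m Δ Γ' → ∃ k ≤ m, PathN I k Γ Γ' := by
  intro Δ h
  induction h using Relation.ReflTransGen.head_induction_on with
  | refl => exact fun m hm => ⟨m, le_refl m, hm⟩
  | head hst _ ih =>
    rename_i Δ₀ Δ₁ _
    intro m hm
    cases hm with
    | refl => exact absurd hst.2 hΓ'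
    | step hred hrest =>
      rename_i E n
      have hE : E = Δ₁ := hst.1.2 E hred
      subst hE
      obtain ⟨k, hk, hpk⟩ := ih n hrest
      exact ⟨k, le_trans hk (Nat.le_succ n), hpk⟩

/-- if `Δ → Δ₁`, `Δ₁` deterministically and safely reduces
back to `Δ`, `Δ` is a safe state, and an unsafe state `Δ'` is reachable from
`Δ`, then `Δ'` is reachable through some first step `Δ₂ ≠ Δ₁`. -/
theorem unsafe_via_other_step (I : Finset ℕ) (Γ Γ₁ Γ' : ℕ → SType)
    (h1 : CRed I Γ Γ₁)
    (h2 : Relation.ReflTransGen (SafeDetRed I) Γ₁ Γ)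
    (h3 : SafeState I Γ)
    (h4 : Relation.ReflTransGen (CRed I) Γ Γ')
    (h5 : ¬ SafeState I Γ') :
    ∃ Γ₂, Γ₂ ≠ Γ₁ ∧ CRed I Γ Γ₂ ∧ Relation.ReflTransGen (CRed I) Γ₂ Γ' := by
  have hex : ∃ n, PathN I n Γ Γ' := pathN_of_rtg h4
  classical
  have hn : PathN I (Nat.find hex) Γ Γ' := Nat.find_spec hex
  generalize hne : Nat.find hex = n at hn
  cases hn with
  | refl => exact absurd h3 h5
  | step hred hrest =>
    rename_i Δ m
    by_cases hΔ : Δ = Γ₁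
    · subst hΔ
      obtain ⟨k, hk, hpk⟩ := det_chain_shortcut h5 h2 m hrest
      have : Nat.find hex ≤ k := Nat.find_min' hex hpk
      omega
    · exact ⟨Δ, hΔ, hred, rtg_of_pathN hrest⟩
end

section
/- Let (Δ_i)_{i∈ℕ} be an infinite reduction path of a typing context Δ with Δ_i →^{ℓ_i} Δ_{i+1}. If for every j ∈ ℕ the set of participants occurring in the labels {ℓ_i | i ≥ j} equals the full set of participants of Δ, then the path is live: every participant with a pending action eventually performs a communication. -/
/-- Participants of a reduction label. -/
def CLab.pt : CLab → Finset ℕ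
  | .comm p q => {p, q}
  | .pick p q _ => {p, q}

/-- An infinite reduction path `(Δᵢ)` with labels `(ℓᵢ)` is *live* if every
pending input, output, selection, or branching of every participant is
eventually performed. -/
def LiveInfPath (I : Finset ℕ) (seq : ℕ → ℕ → SType) (lab : ℕ → CLab) : Prop :=
  ∀ i : ℕ, ∀ p ∈ I,
    (∀ q S T, Unfolds (seq i p) (.inp q S T) → ∃ j, i ≤ j ∧ lab j = .comm q p) ∧
    (∀ q S T, Unfolds (seq i p) (.out q S T) → ∃ j, i ≤ j ∧ lab j = .comm p q) ∧
    (∀ q J f, Unfolds (seq i p) (.sel q J f) → ∃ j l, i ≤ j ∧ lab j = .pick p q l) ∧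
    (∀ q J f, Unfolds (seq i p) (.bra q J f) → ∃ j l, i ≤ j ∧ lab j = .pick q p l)

/-- Unfolding is deterministic. -/
theorem Unfolds.det {T U V : SType} (h1 : Unfolds T U) (h2 : Unfolds T V) : U = V := by
  induction h1 generalizing V with
  | mu h ih => cases h2 with | mu h2 => exact ih h2
  | _ => cases h2 <;> rfl

/-- A reduction does not change the types of non-participants. -/
theorem CRedL.not_pt {I : Finset ℕ} {Γ Γ' : ℕ → SType} {ℓ : CLab}
    (h : CRedL I Γ ℓ Γ') {r : ℕ} (hr : r ∉ ℓ.pt) : Γ' r = Γ r := by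
  cases h with
  | comm hp hq hne h1 h2 =>
    simp [CLab.pt] at hr
    rw [Function.update_of_ne hr.2, Function.update_of_ne hr.1]
  | pick hp hq hne h1 h2 hJ hK =>
    simp [CLab.pt] at hr
    rw [Function.update_of_ne hr.2, Function.update_of_ne hr.1]

theorem step_inp {I : Finset ℕ} {Γ Γ' : ℕ → SType} {ℓ : CLab}
    (h : CRedL I Γ ℓ Γ') {p : ℕ} (hp : p ∈ ℓ.pt)
    {q S : ℕ} {T : SType} (hU : Unfolds (Γ p) (.inp q S T)) : ℓ = .comm q p := by
  cases h with
  | comm ha hb hne h1 h2 =>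
    simp [CLab.pt] at hp
    rcases hp with rfl | rfl
    · exact absurd (h1.det hU) (by simp)
    · have := h2.det hU
      injection this with e1 e2 e3
      subst e1; rfl
  | pick ha hb hne h1 h2 hJ hK =>
    simp [CLab.pt] at hp
    rcases hp with rfl | rfl
    · exact absurd (h1.det hU) (by simp)
    · exact absurd (h2.det hU) (by simp)

theorem step_out {I : Finset ℕ} {Γ Γ' : ℕ → SType} {ℓ : CLab}
    (h : CRedL I Γ ℓ Γ') {p : ℕ} (hp : p ∈ ℓ.pt)
    {q S : ℕ} {T : SType} (hU : Unfolds (Γ p) (.out q S T)) : ℓ = .comm p q := by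
  cases h with
  | comm ha hb hne h1 h2 =>
    simp [CLab.pt] at hp
    rcases hp with rfl | rfl
    · have := h1.det hU
      injection this with e1 e2 e3
      subst e1; rfl
    · exact absurd (h2.det hU) (by simp)
  | pick ha hb hne h1 h2 hJ hK =>
    simp [CLab.pt] at hp
    rcases hp with rfl | rfl
    · exact absurd (h1.det hU) (by simp)
    · exact absurd (h2.det hU) (by simp)

theorem step_sel {I : Finset ℕ} {Γ Γ' : ℕ → SType} {ℓ : CLab}
    (h : CRedL I Γ ℓ Γ') {p : ℕ} (hp : p ∈ ℓ.pt)
    {q : ℕ} {J : Finset ℕ} {f : ℕ → SType} (hU : Unfolds (Γ p) (.sel q J f)) :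
    ∃ l, ℓ = .pick p q l := by
  cases h with
  | comm ha hb hne h1 h2 =>
    simp [CLab.pt] at hp
    rcases hp with rfl | rfl
    · exact absurd (h1.det hU) (by simp)
    · exact absurd (h2.det hU) (by simp)
  | @pick a b l _ _ _ _ ha hb hne h1 h2 hJ hK =>
    simp [CLab.pt] at hp
    rcases hp with rfl | rfl
    · have := h1.det hU
      injection this with e1 e2 e3
      subst e1; exact ⟨l, rfl⟩
    · exact absurd (h2.det hU) (by simp)

theorem step_bra {I : Finset ℕ} {Γ Γ' : ℕ → SType} {ℓ : CLab}
    (h : CRedL I Γ ℓ Γ') {p : ℕ} (hp : p ∈ ℓ.pt)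
    {q : ℕ} {J : Finset ℕ} {f : ℕ → SType} (hU : Unfolds (Γ p) (.bra q J f)) :
    ∃ l, ℓ = .pick q p l := by
  cases h with
  | comm ha hb hne h1 h2 =>
    simp [CLab.pt] at hp
    rcases hp with rfl | rfl
    · exact absurd (h1.det hU) (by simp)
    · exact absurd (h2.det hU) (by simp)
  | @pick a b l _ _ _ _ ha hb hne h1 h2 hJ hK =>
    simp [CLab.pt] at hp
    rcases hp with rfl | rfl
    · exact absurd (h1.det hU) (by simp)
    · have := h2.det hU
      injection this with e1 e2 e3
      subst e1; exact ⟨l, rfl⟩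

/-- if along an infinite reduction path every suffix of
the label sequence mentions all participants of the context, then the path
is live. -/
theorem allParticipants_suffix_live (I : Finset ℕ)
    (seq : ℕ → ℕ → SType) (lab : ℕ → CLab)
    (hstep : ∀ i, CRedL I (seq i) (lab i) (seq (i + 1)))
    (hpt : ∀ j : ℕ, {r | ∃ i, j ≤ i ∧ r ∈ (lab i).pt} = (I : Set ℕ)) :
    LiveInfPath I seq lab := by
  classical
  intro i p hp
  have hex : ∃ j, i ≤ j ∧ p ∈ (lab j).pt := by
    have hpI : p ∈ (I : Set ℕ) := hp
    rw [← hpt i] at hpI; exact hpI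
  set j0 := Nat.find hex with hj0def
  obtain ⟨hij0, hpj0⟩ := Nat.find_spec hex
  have hmin : ∀ k, i ≤ k → k < j0 → p ∉ (lab k).pt := fun k hik hk hm =>
    Nat.find_min hex hk ⟨hik, hm⟩
  have hsame : ∀ k, i ≤ k → k ≤ j0 → seq k p = seq i p := by
    intro k
    induction k with
    | zero => intro h _; cases Nat.le_zero.mp h; rfl
    | succ k ih =>
      intro hik hkj
      rcases Nat.lt_or_ge i (k + 1) with h | h
      · have hik' : i ≤ k := Nat.lt_succ_iff.mp h
        have hkj' : k < j0 := lt_of_lt_of_le (Nat.lt_succ_self k) hkj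
        rw [(hstep k).not_pt (hmin k hik' hkj')]
        exact ih hik' (le_of_lt hkj')
      · have : i = k + 1 := le_antisymm hik h
        rw [this]
  have hS : seq j0 p = seq i p := hsame j0 hij0 le_rfl
  refine ⟨?_, ?_, ?_, ?_⟩
  · intro q S T hU
    exact ⟨j0, hij0, step_inp (hstep j0) hpj0 (hS ▸ hU)⟩
  · intro q S T hU
    exact ⟨j0, hij0, step_out (hstep j0) hpj0 (hS ▸ hU)⟩
  · intro q J f hU
    obtain ⟨l, hl⟩ := step_sel (hstep j0) hpj0 (hS ▸ hU)
    exact ⟨j0, l, hij0, hl⟩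
  · intro q J f hU
    obtain ⟨l, hl⟩ := step_bra (hstep j0) hpj0 (hS ▸ hU)
    exact ⟨j0, l, hij0, hl⟩
end
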